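/- arXiv:1907.10868 — 5 statements merged into one kernel-verified Lean document; each statement's English description precedes it below -/
import Mathlib

section
/- Define a sequence of positive integers by m₁ := 1 and m_{j+1} := ∏_{l=1}^{j} (2 m_l⁴ + 1). Then for every j ≥ 1, the integer 2 m_j⁴ + 1 cannot be written as x² + y² with x, y rational numbers. -/
/-!
Every `m_j` is odd (`m₁ = 1`, and `m_{j+1}` is a product of odd factors `2 m_l⁴ + 1`),
so `2 m_j⁴ + 1 ≡ 3 (mod 4)`. Clearing denominators, `n = x² + y²` over `ℚ` gives
`n c² = a² + b²` over `ℕ`; since `c²` does not change the parity of any `p`-adic valuation,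
the two-squares theorem makes `n` itself a sum of two squares of integers, which is impossible
for `n ≡ 3 (mod 4)`.
-/

theorem Nat.mod_four_ne_three_of_eq_sq_add_sq {n x y : ℕ} (h : n = x ^ 2 + y ^ 2) :
    n % 4 ≠ 3 := by
  have key : ∀ a b : ZMod 4, a ^ 2 + b ^ 2 ≠ 3 := by decide
  intro hn
  have hn' : (n : ZMod 4) = 3 := by rw [← ZMod.natCast_mod, hn]; rfl
  apply key x y
  rw [← hn', h]
  push_cast
  rfl

theorem Nat.eq_sq_add_sq_of_mul_sq_eq_sq_add_sq {n c : ℕ} (hc : c ≠ 0)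
    (h : ∃ x y, n * c ^ 2 = x ^ 2 + y ^ 2) : ∃ x y, n = x ^ 2 + y ^ 2 := by
  rw [Nat.eq_sq_add_sq_iff] at h ⊢
  intro q hq hq4
  have : Fact q.Prime := ⟨Nat.prime_of_mem_primeFactors hq⟩
  have hn : n ≠ 0 := (Nat.mem_primeFactors.mp hq).2.2
  have hval := h q (Nat.primeFactors_mono (dvd_mul_right n _) (by positivity) hq) hq4
  rw [padicValNat.mul hn (pow_ne_zero 2 hc), padicValNat.pow] at hval
  exact (Nat.even_add.mp hval).mpr (even_two_mul _)

theorem Nat.eq_sq_add_sq_of_cast_eq_sq_add_sq {n : ℕ} {x y : ℚ} (h : (n : ℚ) = x ^ 2 + y ^ 2) :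
    ∃ a b, n = a ^ 2 + b ^ 2 := by
  refine Nat.eq_sq_add_sq_of_mul_sq_eq_sq_add_sq (c := x.den * y.den) (by positivity)
    ⟨(x.num * y.den).natAbs, (y.num * x.den).natAbs, ?_⟩
  zify
  simp only [sq_abs]
  have hq : ((n * (x.den * y.den) ^ 2 : ℤ) : ℚ) =
      ((x.num * y.den) ^ 2 + (y.num * x.den) ^ 2 : ℤ) := by
    push_cast
    rw [← Rat.mul_den_eq_num x, ← Rat.mul_den_eq_num y, h]
    ring
  exact_mod_cast hq

theorem Nat.two_mul_pow_four_add_one_mod_four {k : ℕ} (hk : Odd k) : (2 * k ^ 4 + 1) % 4 = 3 := by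
  obtain ⟨t, ht⟩ := hk.pow (n := 4)
  omega

theorem Finset.odd_prod_two_mul_pow_four_add_one {ι : Type*} (s : Finset ι) (f : ι → ℕ) :
    Odd (∏ l ∈ s, (2 * f l ^ 4 + 1)) :=
  Finset.prod_induction _ Odd (fun _ _ ha hb => ha.mul hb) odd_one
    (fun l _ => ⟨f l ^ 4, rfl⟩)

/-- Let `(m_j)_{j ≥ 1}` be the sequence of positive integers defined by
`m₁ = 1` and `m_{j+1} = ∏_{l=1}^{j} (2 m_l⁴ + 1)`. Then for every `j ≥ 1`, the integer
`2 m_j⁴ + 1` is not a sum of two squares of rational numbers. -/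
theorem not_sum_two_rat_squares_of_seq (m : ℕ → ℕ)
    (h1 : m 1 = 1)
    (hrec : ∀ j : ℕ, 1 ≤ j → m (j + 1) = ∏ l ∈ Finset.Icc 1 j, (2 * m l ^ 4 + 1)) :
    ∀ j : ℕ, 1 ≤ j → ¬ ∃ x y : ℚ, ((2 * m j ^ 4 + 1 : ℕ) : ℚ) = x ^ 2 + y ^ 2 := by
  intro j hj ⟨x, y, hxy⟩
  have hodd : Odd (m j) := by
    obtain ⟨k, rfl⟩ := Nat.exists_eq_add_of_le' hj
    cases k with
    | zero => rw [zero_add, h1]; exact odd_one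
    | succ k =>
      rw [hrec (k + 1) (by omega)]
      exact Finset.odd_prod_two_mul_pow_four_add_one _ m
  obtain ⟨a, b, hab⟩ := Nat.eq_sq_add_sq_of_cast_eq_sq_add_sq hxy
  exact Nat.mod_four_ne_three_of_eq_sq_add_sq hab (Nat.two_mul_pow_four_add_one_mod_four hodd)
end

section
/- A positive integer n can be written as a sum of two squares of rational numbers if and only if n can be written as a sum of two squares of integers. -/
/-!
Clearing denominators turns a rational representation `n = x² + y²` into an integral one
`n d² = a² + b²`. By Fermat's criterion a natural number is a sum of two integer squares iff
every prime `q ≡ 3 (mod 4)` occurs in it to an even power, and multiplying by the square `d²`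
does not change the parity of any exponent.
-/

theorem Nat.exists_sq_add_sq_of_mul_sq_eq_sq_add_sq {n d a b : ℕ} (hd : d ≠ 0)
    (h : n * d ^ 2 = a ^ 2 + b ^ 2) : ∃ x y : ℕ, n = x ^ 2 + y ^ 2 := by
  rcases eq_or_ne n 0 with rfl | hn
  · exact ⟨0, 0, rfl⟩
  have hnd : n * d ^ 2 ≠ 0 := mul_ne_zero hn (pow_ne_zero 2 hd)
  refine Nat.eq_sq_add_sq_iff.mpr fun q hq hq3 ↦ ?_
  have : Fact q.Prime := ⟨Nat.prime_of_mem_primeFactors hq⟩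
  have hq' : q ∈ (n * d ^ 2).primeFactors :=
    Nat.primeFactors_mono (dvd_mul_right n _) hnd hq
  have heven := Nat.eq_sq_add_sq_iff.mp ⟨a, b, h⟩ q hq' hq3
  rw [padicValNat.mul hn (pow_ne_zero 2 hd), padicValNat.pow d 2] at heven
  simpa [parity_simps] using heven

theorem Rat.sq_add_sq_mul_den_mul_den_sq (x y : ℚ) :
    (x ^ 2 + y ^ 2) * ((x.den * y.den : ℕ) : ℚ) ^ 2 =
      ((x.num * y.den : ℤ) : ℚ) ^ 2 + ((y.num * x.den : ℤ) : ℚ) ^ 2 := by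
  push_cast
  rw [← Rat.mul_den_eq_num x, ← Rat.mul_den_eq_num y]
  ring

theorem sum_two_rat_squares_iff_sum_two_int_squares_general (n : ℕ) :
    (∃ x y : ℚ, (n : ℚ) = x ^ 2 + y ^ 2) ↔ (∃ a b : ℤ, (n : ℤ) = a ^ 2 + b ^ 2) := by
  constructor
  · rintro ⟨x, y, hxy⟩
    set a := x.num * y.den
    set b := y.num * x.den
    have hcleared : (n : ℤ) * (x.den * y.den) ^ 2 = a ^ 2 + b ^ 2 := by
      have := Rat.sq_add_sq_mul_den_mul_den_sq x y
      rw [← hxy] at this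
      exact_mod_cast this
    have hnat : n * (x.den * y.den) ^ 2 = a.natAbs ^ 2 + b.natAbs ^ 2 := by
      zify
      simpa only [sq_abs] using hcleared
    obtain ⟨u, v, huv⟩ := Nat.exists_sq_add_sq_of_mul_sq_eq_sq_add_sq
      (mul_ne_zero x.den_nz y.den_nz) hnat
    exact ⟨u, v, by exact_mod_cast huv⟩
  · rintro ⟨a, b, hab⟩
    exact ⟨a, b, by exact_mod_cast hab⟩

/-- A positive integer `n` is a sum of two squares of rational numbers
if and only if it is a sum of two squares of integers. -/
theorem sum_two_rat_squares_iff_sum_two_int_squares (n : ℕ) (hn : 0 < n) :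
    (∃ x y : ℚ, (n : ℚ) = x ^ 2 + y ^ 2) ↔ (∃ a b : ℤ, (n : ℤ) = a ^ 2 + b ^ 2) :=
  sum_two_rat_squares_iff_sum_two_int_squares_general n
end

section
/- Define a sequence of positive integers by m₁ := 1 and m_{j+1} := ∏_{l=1}^{j} (2 m_l⁴ + 1). Then every m_j is odd, 2 m_j⁴ + 1 ≡ 3 (mod 4) for every j, and for all j ≠ k the integers 2 m_j⁴ + 1 and 2 m_k⁴ + 1 are coprime. -/
/-! Each `2 m_l⁴ + 1` with `l < k` divides `m_k`, while `m_k` is coprime to `2 m_k⁴ + 1`;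
hence the factors are pairwise coprime. All factors `2 x⁴ + 1` are odd, so every `m_j` is odd,
and then `2 m_j⁴ ≡ 2 (mod 4)`. -/

open Finset

lemma Nat.coprime_two_mul_pow_succ_add_one (a n : ℕ) : Nat.Coprime a (2 * a ^ (n + 1) + 1) := by
  rw [show 2 * a ^ (n + 1) + 1 = a * (2 * a ^ n) + 1 by ring, Nat.coprime_mul_left_add_right]
  exact Nat.coprime_one_right a

lemma Nat.two_mul_pow_add_one_mod_four {a : ℕ} (ha : Odd a) (n : ℕ) :
    (2 * a ^ n + 1) % 4 = 3 := by
  obtain ⟨s, hs⟩ := ha.pow (n := n)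
  omega

section ProdRecursion

variable {m g : ℕ → ℕ} (hrec : ∀ j, 1 ≤ j → m (j + 1) = ∏ l ∈ Icc 1 j, g l)
include hrec

lemma dvd_of_prod_rec {j k : ℕ} (hj : 1 ≤ j) (hjk : j < k) : g j ∣ m k := by
  obtain ⟨i, rfl⟩ := Nat.exists_eq_add_of_lt hjk
  rw [hrec (j + i) (by omega)]
  exact dvd_prod_of_mem g (mem_Icc.mpr ⟨hj, by omega⟩)

lemma odd_of_prod_rec (h1 : Odd (m 1)) (hg : ∀ l, Odd (g l)) {j : ℕ} (hj : 1 ≤ j) :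
    Odd (m j) := by
  obtain ⟨i, rfl⟩ := Nat.exists_eq_add_of_le' hj
  cases i with
  | zero => exact h1
  | succ i =>
    rw [hrec (i + 1) (by omega)]
    exact prod_induction g Odd (fun _ _ => Odd.mul) odd_one fun l _ => hg l

end ProdRecursion

/-- Let `(m_j)_{j ≥ 1}` be the sequence of positive integers defined by
`m₁ = 1` and `m_{j+1} = ∏_{l=1}^{j} (2 m_l⁴ + 1)`. Then every `m_j` is odd,
`2 m_j⁴ + 1 ≡ 3 (mod 4)` for every `j ≥ 1`, and for `j ≠ k` the integers `2 m_j⁴ + 1` and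
`2 m_k⁴ + 1` are coprime. -/
theorem seq_odd_mod_four_coprime (m : ℕ → ℕ)
    (h1 : m 1 = 1)
    (hrec : ∀ j : ℕ, 1 ≤ j → m (j + 1) = ∏ l ∈ Finset.Icc 1 j, (2 * m l ^ 4 + 1)) :
    (∀ j : ℕ, 1 ≤ j → Odd (m j)) ∧
    (∀ j : ℕ, 1 ≤ j → (2 * m j ^ 4 + 1) % 4 = 3) ∧
    (∀ j k : ℕ, 1 ≤ j → 1 ≤ k → j ≠ k →
      Nat.Coprime (2 * m j ^ 4 + 1) (2 * m k ^ 4 + 1)) := by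
  have hodd : ∀ j, 1 ≤ j → Odd (m j) := fun j =>
    odd_of_prod_rec hrec (by rw [h1]; exact odd_one) fun l => odd_two_mul_add_one _
  have hcop : ∀ j k, 1 ≤ j → j < k → Nat.Coprime (2 * m j ^ 4 + 1) (2 * m k ^ 4 + 1) :=
    fun j k hj hjk =>
      (Nat.coprime_two_mul_pow_succ_add_one (m k) 3).coprime_dvd_left (dvd_of_prod_rec hrec hj hjk)
  refine ⟨hodd, fun j hj => Nat.two_mul_pow_add_one_mod_four (hodd j hj) 4,
    fun j k hj hk hne => ?_⟩
  rcases hne.lt_or_gt with hjk | hkj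
  · exact hcop j k hj hjk
  · exact (hcop k j hk hkj).symm
end

section
/- Let m and m' be positive integers. The binary quadratic forms over ℚ given by q(x, y) = 8m·x² + 8m·y² and q'(x, y) = 8m'·x² + 8m'·y² are equivalent over ℚ if and only if the product m·m' is a sum of two squares of integers. -/
/-!
An isometry from `c(x² + y²)` to `c'(x² + y²)` sends `(1, 0)` to a vector `v` with
`c'(v₀² + v₁²) = c`; conversely, if `c = c'(α² + β²)`, the similarity with matrix
`[[α, -β], [β, α]]` multiplies `x² + y²` by `α² + β²` and so is an isometry. Hence the two forms
are equivalent iff `m / m'`, equivalently `m m'`, is a sum of two rational squares. A natural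
number that is a sum of two rational squares is a sum of two integer squares: clearing a square
denominator does not change the parity of the exponent of any prime `q ≡ 3 (mod 4)`.
-/

theorem Nat.exists_sq_add_sq_of_mul_sq {n d : ℕ} (hd : d ≠ 0)
    (h : ∃ x y, n * d ^ 2 = x ^ 2 + y ^ 2) : ∃ x y, n = x ^ 2 + y ^ 2 := by
  rcases eq_or_ne n 0 with rfl | hn
  · exact ⟨0, 0, rfl⟩
  rw [Nat.eq_sq_add_sq_iff] at h ⊢
  intro q hq hq3
  have : Fact q.Prime := ⟨Nat.prime_of_mem_primeFactors hq⟩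
  have hq' : q ∈ (n * d ^ 2).primeFactors :=
    Nat.primeFactors_mono (dvd_mul_right n _) (by positivity) hq
  have hval := h q hq' hq3
  rw [padicValNat.mul hn (pow_ne_zero 2 hd), padicValNat.pow _ _] at hval
  simpa [Nat.even_add] using hval

theorem Nat.exists_sq_add_sq_of_eq_rat_sq_add_sq {n : ℕ} {x y : ℚ} (h : (n : ℚ) = x ^ 2 + y ^ 2) :
    ∃ a b : ℕ, n = a ^ 2 + b ^ 2 := by
  refine Nat.exists_sq_add_sq_of_mul_sq (d := x.den * y.den) (by positivity)
    ⟨(x.num * y.den).natAbs, (y.num * x.den).natAbs, ?_⟩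
  rw [← Rat.num_div_den x, ← Rat.num_div_den y] at h
  field_simp at h
  zify
  simp only [sq_abs]
  have hcleared : ((n * (x.den * y.den) ^ 2 : ℤ) : ℚ) =
      (((x.num * y.den) ^ 2 + (y.num * x.den) ^ 2 : ℤ) : ℚ) := by
    push_cast
    linear_combination h
  exact_mod_cast hcleared

namespace QuadraticMap

theorem weightedSumSquares_pair_apply {R : Type*} [CommSemiring R] (a b : R) (v : Fin 2 → R) :
    weightedSumSquares R ![a, b] v = a * (v 0 * v 0) + b * (v 1 * v 1) := by
  simp [weightedSumSquares_apply, Fin.sum_univ_two]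

theorem equivalent_weightedSumSquares_pair_iff {K : Type*} [Field K] {c c' : K} (hc : c ≠ 0) :
    Equivalent (weightedSumSquares K ![c, c]) (weightedSumSquares K ![c', c']) ↔
      ∃ α β : K, c = c' * (α ^ 2 + β ^ 2) := by
  constructor
  · rintro ⟨f⟩
    refine ⟨f ![1, 0] 0, f ![1, 0] 1, ?_⟩
    have hf := f.map_app ![1, 0]
    simp only [weightedSumSquares_pair_apply, Matrix.cons_val_zero, Matrix.cons_val_one,
      Matrix.cons_val_fin_one, mul_one, mul_zero, add_zero] at hf
    linear_combination -hf
  · rintro ⟨α, β, hαβ⟩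
    let A : Matrix (Fin 2) (Fin 2) K := !![α, -β; β, α]
    have hdet : LinearMap.det (Matrix.toLin' A) ≠ 0 := by
      rw [LinearMap.det_toLin', Matrix.det_fin_two_of]
      intro hzero
      exact hc (by rw [hαβ]; linear_combination c' * hzero)
    refine ⟨⟨(Matrix.toLin' A).equivOfDetNeZero hdet, fun v => ?_⟩⟩
    simp only [LinearEquiv.coe_ofIsUnitDet, AddHom.toFun_eq_coe, LinearMap.coe_toAddHom,
      Matrix.toLin'_apply, A, Matrix.cons_mulVec, Matrix.empty_mulVec, dotProduct, Fin.sum_univ_two,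
      Matrix.cons_val_zero, Matrix.cons_val_one, Matrix.cons_val_fin_one, weightedSumSquares_pair_apply]
    linear_combination (v 0 ^ 2 + v 1 ^ 2) * hαβ.symm

end QuadraticMap

theorem exists_eq_mul_sq_add_sq_iff {K : Type*} [Field K] {c c' : K} (hc' : c' ≠ 0) :
    (∃ α β : K, c = c' * (α ^ 2 + β ^ 2)) ↔ ∃ x y : K, c * c' = x ^ 2 + y ^ 2 := by
  constructor
  · rintro ⟨α, β, h⟩
    exact ⟨c' * α, c' * β, by rw [h]; ring⟩
  · rintro ⟨x, y, h⟩
    refine ⟨x / c', y / c', ?_⟩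
    field_simp
    linear_combination h

/-- For positive integers `m, m'`, the binary quadratic forms
`8m·x² + 8m·y²` and `8m'·x² + 8m'·y²` on `ℚ²` are equivalent over `ℚ` if and only if
`m · m'` is a sum of two squares of integers. -/
theorem diag_forms_equivalent_iff_sum_two_squares (m m' : ℕ) (hm : 0 < m) (hm' : 0 < m') :
    QuadraticMap.Equivalent
      (QuadraticMap.weightedSumSquares ℚ (![(8 * m : ℚ), (8 * m : ℚ)]))
      (QuadraticMap.weightedSumSquares ℚ (![(8 * m' : ℚ), (8 * m' : ℚ)])) ↔
    ∃ a b : ℤ, ((m : ℤ) * (m' : ℤ)) = a ^ 2 + b ^ 2 := by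
  rw [QuadraticMap.equivalent_weightedSumSquares_pair_iff (by positivity)]
  have h8 : ∀ α β : ℚ, (8 * m : ℚ) = 8 * m' * (α ^ 2 + β ^ 2) ↔ (m : ℚ) = m' * (α ^ 2 + β ^ 2) :=
    fun α β => by rw [mul_assoc, mul_right_inj' (by norm_num)]
  simp only [h8, exists_eq_mul_sq_add_sq_iff (show (m' : ℚ) ≠ 0 by positivity)]
  constructor
  · rintro ⟨x, y, h⟩
    obtain ⟨a, b, hab⟩ :=
      Nat.exists_sq_add_sq_of_eq_rat_sq_add_sq (n := m * m') (by push_cast; exact h)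
    exact ⟨a, b, by exact_mod_cast hab⟩
  · rintro ⟨a, b, h⟩
    exact ⟨a, b, by exact_mod_cast h⟩
end

section
/- Let C be a monoidal category and let M and N be Frobenius algebra objects in C. Then every morphism of Frobenius algebra objects φ : M → N is an isomorphism in C. -/
open CategoryTheory MonoidalCategory

/-- A Frobenius algebra object in a monoidal category `C`: an object equipped with a
monoid structure and a comonoid structure satisfying the Frobenius condition. -/
structure FrobeniusAlgebraObject (C : Type*) [Category C] [MonoidalCategory C] where
  /-- The underlying object. -/
  X : C
  /-- The multiplication. -/
  mul : X ⊗ X ⟶ X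
  /-- The unit. -/
  one : 𝟙_ C ⟶ X
  /-- The comultiplication. -/
  comul : X ⟶ X ⊗ X
  /-- The counit. -/
  counit : X ⟶ 𝟙_ C
  one_mul : (one ▷ X) ≫ mul = (λ_ X).hom
  mul_one : (X ◁ one) ≫ mul = (ρ_ X).hom
  mul_assoc : (mul ▷ X) ≫ mul = (α_ X X X).hom ≫ (X ◁ mul) ≫ mul
  comul_counit : comul ≫ (X ◁ counit) = (ρ_ X).inv
  counit_comul : comul ≫ (counit ▷ X) = (λ_ X).inv
  comul_assoc : comul ≫ (comul ▷ X) ≫ (α_ X X X).hom = comul ≫ (X ◁ comul)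
  /-- The Frobenius condition, first half: `(id ⊗ μ) ∘ (δ ⊗ id) = δ ∘ μ`. -/
  frobenius₁ : (comul ▷ X) ≫ (α_ X X X).hom ≫ (X ◁ mul) = mul ≫ comul
  /-- The Frobenius condition, second half: `(μ ⊗ id) ∘ (id ⊗ δ) = δ ∘ μ`. -/
  frobenius₂ : (X ◁ comul) ≫ (α_ X X X).inv ≫ (mul ▷ X) = mul ≫ comul

/-- A morphism of Frobenius algebra objects: a morphism in `C` commuting with the
multiplications, units, comultiplications and counits. -/
structure FrobeniusAlgebraObject.Hom {C : Type*} [Category C] [MonoidalCategory C]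
    (M N : FrobeniusAlgebraObject C) where
  /-- The underlying morphism in `C`. -/
  hom : M.X ⟶ N.X
  mul_hom : M.mul ≫ hom = (hom ⊗ₘ hom) ≫ N.mul
  one_hom : M.one ≫ hom = N.one
  comul_hom : M.comul ≫ (hom ⊗ₘ hom) = hom ≫ N.comul
  counit_hom : hom ≫ N.counit = M.counit

/-! A Frobenius algebra object is self-dual: `η ≫ δ : 𝟙 ⟶ M ⊗ M` and `μ ≫ ε : M ⊗ M ⟶ 𝟙` satisfy
the snake identities, by the Frobenius condition together with the (co)unit laws. A morphism `φ`
of Frobenius algebra objects preserves this pairing and copairing, and then the transpose of `φ`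
with respect to the two dualities is a two-sided inverse of `φ`. -/

namespace CategoryTheory

variable {C : Type*} [Category C] [MonoidalCategory C]

theorem isIso_of_preserves_exactPairing {X X' Y Y' : C} [ExactPairing X X']
    [ExactPairing Y Y'] (f : X ⟶ Y) (f' : X' ⟶ Y') (hη : η_ X X' ≫ (f ⊗ₘ f') = η_ Y Y')
    (hε : (f' ⊗ₘ f) ≫ ε_ Y Y' = ε_ X X') : IsIso f := by
  -- the inverse is the transpose of `f'` through the pairings of `X` and `Y`
  refine ⟨(λ_ Y).inv ≫ η_ X X' ▷ Y ≫ (α_ _ _ _).hom ≫ X ◁ (f' ▷ Y ≫ ε_ Y Y') ≫ (ρ_ X).hom,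
    ?_, ?_⟩
  · calc _ = (λ_ X).inv ≫ η_ X X' ▷ X ≫ (α_ _ _ _).hom ≫ X ◁ ((f' ⊗ₘ f) ≫ ε_ Y Y') ≫
          (ρ_ X).hom := by
          rw [leftUnitor_inv_naturality_assoc, whisker_exchange_assoc,
            associator_naturality_right_assoc, ← whiskerLeft_comp_assoc, MonoidalCategory.tensorHom_def',
            Category.assoc]
      _ = 𝟙 X := by simp [hε]
  · calc _ = (λ_ Y).inv ≫ (η_ X X' ≫ (f ⊗ₘ f')) ▷ Y ≫ (α_ _ _ _).hom ≫ Y ◁ ε_ Y Y' ≫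
          (ρ_ Y).hom := by
          simp only [Category.assoc, whiskerLeft_comp, comp_whiskerRight]
          rw [← rightUnitor_naturality, whisker_exchange_assoc, whisker_exchange_assoc,
            ← associator_naturality_left_assoc, ← associator_naturality_middle_assoc,
            ← comp_whiskerRight_assoc (f ▷ X'), ← MonoidalCategory.tensorHom_def]
      _ = 𝟙 Y := by simp [hη]

end CategoryTheory

namespace FrobeniusAlgebraObject

variable {C : Type*} [Category C] [MonoidalCategory C]

instance exactPairing (F : FrobeniusAlgebraObject C) : ExactPairing F.X F.X where
  coevaluation' := F.one ≫ F.comul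
  evaluation' := F.mul ≫ F.counit
  coevaluation_evaluation' := by
    simp only [whiskerLeft_comp, comp_whiskerRight, Category.assoc]
    rw [reassoc_of% F.frobenius₂, reassoc_of% F.mul_one, F.counit_comul]
  evaluation_coevaluation' := by
    simp only [whiskerLeft_comp, comp_whiskerRight, Category.assoc]
    rw [reassoc_of% F.frobenius₁, reassoc_of% F.one_mul, F.comul_counit]

variable {M N : FrobeniusAlgebraObject C}

theorem Hom.coevaluation_comp_tensorHom (φ : Hom M N) :
    η_ M.X M.X ≫ (φ.hom ⊗ₘ φ.hom) = η_ N.X N.X := by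
  change (M.one ≫ M.comul) ≫ _ = N.one ≫ N.comul
  rw [Category.assoc, φ.comul_hom, reassoc_of% φ.one_hom]

theorem Hom.tensorHom_comp_evaluation (φ : Hom M N) :
    (φ.hom ⊗ₘ φ.hom) ≫ ε_ N.X N.X = ε_ M.X M.X := by
  change _ ≫ N.mul ≫ N.counit = M.mul ≫ M.counit
  rw [← reassoc_of% φ.mul_hom, φ.counit_hom]

end FrobeniusAlgebraObject

/-- In a monoidal category, every morphism of Frobenius algebra objects
is an isomorphism (on underlying objects). -/
theorem FrobeniusAlgebraObject.Hom.isIso {C : Type*} [Category C] [MonoidalCategory C]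
    (M N : FrobeniusAlgebraObject C) (φ : FrobeniusAlgebraObject.Hom M N) :
    IsIso φ.hom :=
  isIso_of_preserves_exactPairing φ.hom φ.hom φ.coevaluation_comp_tensorHom
    φ.tensorHom_comp_evaluation
end
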